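/- For positive integers n, m and positive integers k₁,…,kₙ, l₁,…,l_m, the stuffle product satisfies z_{k₁}z_{k₂}⋯z_{kₙ} * z_{l₁}z_{l₂}⋯z_{l_m} = Σ_{0 ≤ k ≤ min(m,n)} Σ z_{a₁}z_{a₂}⋯z_{a_{n+m−k}}, where the inner sum is over all sequences (a₁,…,a_{n+m−k}) of positive integers with a₁+⋯+a_{n+m−k} = Σ_{r=1}^{n} k_r + Σ_{s=1}^{m} l_s such that: each entry a_w is either a single k_r, a single l_s, or a sum k_r + l_s; each k_r and each l_s is used exactly once among all entries; an entry involving k_b never occurs before an entry involving k_a when a < b, and likewise for the l's; and exactly k of the entries are of the form k_r + l_s. -/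

import Mathlib

/- ℍ = ℚ⟨x,y⟩, z_k = x^{k-1}y, and the stuffle (harmonic) product * on the word
basis of ℍ¹ (a ℚ-bilinear map is determined by its values on words). -/

noncomputable section

open Finset

abbrev A : Type := FreeAlgebra ℚ Bool

def Xg : A := FreeAlgebra.ι ℚ false
def Yg : A := FreeAlgebra.ι ℚ true

/-- `z k = x^(k-1) y`. -/
def z (k : ℕ) : A := Xg ^ (k - 1) * Yg

/-- The word `z_{k₁} ⋯ z_{kₙ}`. -/
def zw (w : List ℕ) : A := (w.map z).prod

/-- The stuffle (harmonic) product, given on the word basis of ℍ¹. -/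
def hst : List ℕ → List ℕ → A
  | [], w => zw w
  | k :: w₁, [] => zw (k :: w₁)
  | k :: w₁, l :: w₂ =>
      z k * hst w₁ (l :: w₂) + z l * hst (k :: w₁) w₂ + z (k + l) * hst w₁ w₂
  termination_by w₁ w₂ => w₁.length + w₂.length

/-- Number of indices of the first list lying in the fiber of `σ` over `r`. -/
def Uk (n m N : ℕ) (σ : Fin (n + m) → Fin N) (r : Fin N) : ℕ :=
  (Finset.univ.filter fun a : Fin n => σ (Fin.castAdd m a) = r).card

/-- Number of indices of the second list lying in the fiber of `σ` over `r`. -/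
def Ul (n m N : ℕ) (σ : Fin (n + m) → Fin N) (r : Fin N) : ℕ :=
  (Finset.univ.filter fun b : Fin m => σ (Fin.natAdd n b) = r).card

/-- The admissible surjections for the stuffle product: weakly increasing on each of
the two blocks of indices (preserving the relative orders), each fiber is a single
`k_r`, a single `l_s`, or one of each (giving an entry `k_r + l_s`), and exactly `k`
fibers are of the mixed kind. -/
def StuffleAdm (n m k : ℕ) (σ : Fin (n + m) → Fin (n + m - k)) : Prop :=
  (∀ a b : Fin n, a ≤ b → σ (Fin.castAdd m a) ≤ σ (Fin.castAdd m b)) ∧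
  (∀ a b : Fin m, a ≤ b → σ (Fin.natAdd n a) ≤ σ (Fin.natAdd n b)) ∧
  Function.Surjective σ ∧
  (∀ r, (Uk n m _ σ r = 1 ∧ Ul n m _ σ r = 0) ∨
        (Uk n m _ σ r = 0 ∧ Ul n m _ σ r = 1) ∨
        (Uk n m _ σ r = 1 ∧ Ul n m _ σ r = 1)) ∧
  (Finset.univ.filter fun r => Uk n m _ σ r = 1 ∧ Ul n m _ σ r = 1).card = k

/-- The entry of the resulting word at position `r`: the sum of the `k`'s and `l`'s
in the fiber of `σ` over `r`. -/
def entry (n m N : ℕ) (ks : Fin n → ℕ) (ls : Fin m → ℕ)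
    (σ : Fin (n + m) → Fin N) (r : Fin N) : ℕ :=
  (∑ a ∈ Finset.univ.filter fun a : Fin n => σ (Fin.castAdd m a) = r, ks a) +
  (∑ b ∈ Finset.univ.filter fun b : Fin m => σ (Fin.natAdd n b) = r, ls b)

open Finset

inductive St : Type | K | L | KL
deriving DecidableEq

instance : Inhabited St := ⟨.K⟩

def cK : St → Bool | .K => true | .KL => true | .L => false
def cL : St → Bool | .L => true | .KL => true | .K => false

/-- stuffle patterns with `n` k-slots and `m` l-slots -/
def C : ℕ → ℕ → Finset (List St)
  | 0, 0 => {[]}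
  | 0, m+1 => (C 0 m).image (List.cons .L)
  | n+1, 0 => (C n 0).image (List.cons .K)
  | n+1, m+1 => ((C n (m+1)).image (List.cons .K) ∪ (C (n+1) m).image (List.cons .L))
      ∪ (C n m).image (List.cons .KL)

lemma mem_C (c : List St) : ∀ n m, c ∈ C n m ↔ c.countP cK = n ∧ c.countP cL = m := by
  induction c with
  | nil =>
    intro n m
    match n, m with
    | 0, 0 => simp [C]
    | 0, m+1 => simp [C]
    | n+1, 0 => simp [C]
    | n+1, m+1 => simp [C]
  | cons s t ih =>
    intro n m
    match n, m with
    | 0, 0 =>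
      simp only [C, mem_singleton, List.countP_cons]
      cases s <;> simp [cK, cL]
    | 0, m+1 =>
      simp only [C, mem_image, List.cons.injEq, List.countP_cons]
      constructor
      · rintro ⟨a, ha, rfl, rfl⟩
        rcases (ih 0 m).1 ha with ⟨h1, h2⟩
        simp [cK, cL, h1, h2]
      · rintro ⟨h1, h2⟩
        cases s <;> simp only [cK, cL, Bool.false_eq_true, if_false, reduceIte] at h1 h2
        · omega
        · exact ⟨t, (ih 0 m).2 ⟨by omega, by omega⟩, rfl, rfl⟩
        · omega
    | n+1, 0 =>
      simp only [C, mem_image, List.cons.injEq, List.countP_cons]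
      constructor
      · rintro ⟨a, ha, rfl, rfl⟩
        rcases (ih n 0).1 ha with ⟨h1, h2⟩
        simp [cK, cL, h1, h2]
      · rintro ⟨h1, h2⟩
        cases s <;> simp only [cK, cL, Bool.false_eq_true, if_false, reduceIte] at h1 h2
        · exact ⟨t, (ih n 0).2 ⟨by omega, by omega⟩, rfl, rfl⟩
        · omega
        · omega
    | n+1, m+1 =>
      simp only [C, mem_union, mem_image, List.cons.injEq, List.countP_cons]
      constructor
      · rintro ((⟨a, ha, rfl, rfl⟩ | ⟨a, ha, rfl, rfl⟩) | ⟨a, ha, rfl, rfl⟩)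
        · rcases (ih n (m+1)).1 ha with ⟨h1, h2⟩; simp [cK, cL, h1, h2]
        · rcases (ih (n+1) m).1 ha with ⟨h1, h2⟩; simp [cK, cL, h1, h2]
        · rcases (ih n m).1 ha with ⟨h1, h2⟩; simp [cK, cL, h1, h2]
      · rintro ⟨h1, h2⟩
        cases s <;> simp only [cK, cL, Bool.false_eq_true, if_false, reduceIte] at h1 h2
        · exact Or.inl (Or.inl ⟨t, (ih n (m+1)).2 ⟨by omega, by omega⟩, rfl, rfl⟩)
        · exact Or.inl (Or.inr ⟨t, (ih (n+1) m).2 ⟨by omega, by omega⟩, rfl, rfl⟩)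
        · exact Or.inr ⟨t, (ih n m).2 ⟨by omega, by omega⟩, rfl, rfl⟩

lemma count_len (c : List St) : c.countP cK + c.countP cL = c.length + c.count St.KL := by
  induction c with
  | nil => simp
  | cons s t ih =>
    simp only [List.countP_cons, List.count_cons, List.length_cons]
    cases s <;> simp [cK, cL] at * <;> omega

lemma countKL_le_K (c : List St) : c.count St.KL ≤ c.countP cK := by
  rw [List.count_eq_countP]
  apply List.countP_mono_left
  intro a _ h
  simp at h; subst h; rfl

lemma countKL_le_L (c : List St) : c.count St.KL ≤ c.countP cL := by
  rw [List.count_eq_countP]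
  apply List.countP_mono_left
  intro a _ h
  simp at h; subst h; rfl

def wd : List St → List ℕ → List ℕ → List ℕ
  | [], _, _ => []
  | .K :: c, k :: w1, w2 => k :: wd c w1 w2
  | .L :: c, w1, l :: w2 => l :: wd c w1 w2
  | .KL :: c, k :: w1, l :: w2 => (k + l) :: wd c w1 w2
  | _ :: _, _, _ => []

lemma zw_cons (a : ℕ) (w : List ℕ) : zw (a :: w) = z a * zw w := by simp [zw]

lemma C_zero_left : ∀ m, C 0 m = {List.replicate m .L} := by
  intro m
  induction m with
  | zero => simp [C]
  | succ m ih => simp [C, ih, List.replicate_succ]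

lemma C_zero_right : ∀ n, C (n+1) 0 = {List.replicate (n+1) .K} := by
  intro n
  induction n with
  | zero => simp [C]
  | succ n ih => simp [C, ih, List.replicate_succ]

lemma wd_repL : ∀ w2 : List ℕ, wd (List.replicate w2.length .L) [] w2 = w2 := by
  intro w2
  induction w2 with
  | nil => rfl
  | cons l w ih => rw [List.length_cons, List.replicate_succ]; simp [wd, ih]

lemma wd_repK : ∀ w1 : List ℕ, wd (List.replicate w1.length .K) w1 [] = w1 := by
  intro w1
  induction w1 with
  | nil => rfl
  | cons k w ih => rw [List.length_cons, List.replicate_succ]; simp [wd, ih]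

lemma disj_cons_image (s t : Finset (List St)) (a b : St) (h : a ≠ b) :
    Disjoint (s.image (List.cons a)) (t.image (List.cons b)) := by
  rw [Finset.disjoint_left]
  rintro x hx hy
  simp only [Finset.mem_image] at hx hy
  rcases hx with ⟨u, _, rfl⟩
  rcases hy with ⟨v, _, hv⟩
  injection hv with h1 _
  exact h h1.symm

lemma cons_injective (a : St) : Function.Injective (List.cons a) := fun x y h =>
  (List.cons.injEq .. ▸ h).2

lemma hst_eq (w1 w2 : List ℕ) :
    hst w1 w2 = ∑ c ∈ C w1.length w2.length, zw (wd c w1 w2) := by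
  induction w1, w2 using hst.induct with
  | case1 w2 =>
    rw [show hst [] w2 = zw w2 from by simp [hst]]
    rw [List.length_nil, C_zero_left, Finset.sum_singleton, wd_repL]
  | case2 k w1 =>
    rw [show hst (k :: w1) [] = zw (k :: w1) from by simp [hst]]
    rw [List.length_nil, List.length_cons, C_zero_right, Finset.sum_singleton,
      ← List.length_cons (a := k) (as := w1), wd_repK]
  | case3 k w1 l w2 ih1 ih2 ih3 =>
    rw [show hst (k :: w1) (l :: w2) = z k * hst w1 (l :: w2) + z l * hst (k :: w1) w2
        + z (k + l) * hst w1 w2 from by rw [hst]]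
    rw [ih1, ih2, ih3]
    rw [List.length_cons, List.length_cons,
      show C (w1.length + 1) (w2.length + 1) = ((C w1.length (w2.length+1)).image (List.cons .K)
        ∪ (C (w1.length+1) w2.length).image (List.cons .L))
        ∪ (C w1.length w2.length).image (List.cons .KL) from by simp [C]]
    rw [Finset.sum_union, Finset.sum_union]
    · rw [Finset.sum_image (fun x _ y _ h => cons_injective _ h),
        Finset.sum_image (fun x _ y _ h => cons_injective _ h),
        Finset.sum_image (fun x _ y _ h => cons_injective _ h)]
      simp only [wd, zw_cons, Finset.mul_sum]
    · exact disj_cons_image _ _ _ _ (by simp)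
    · rw [Finset.disjoint_union_left]
      exact ⟨disj_cons_image _ _ _ _ (by simp), disj_cons_image _ _ _ _ (by simp)⟩

section Counting

variable {α : Type*}

lemma countP_take_eq (c : List α) (p : α → Bool) (d : α) :
    ∀ j, j ≤ c.length →
      (c.take j).countP p = ∑ x ∈ Finset.range j, (if p (c.getD x d) then 1 else 0) := by
  intro j hj
  induction j with
  | zero => simp
  | succ j ih =>
    have hjl : j < c.length := by omega
    rw [List.take_succ, List.countP_append, Finset.sum_range_succ, ih (by omega)]
    simp [List.getElem?_eq_getElem hjl, List.getD_eq_getElem c d hjl, List.countP_cons]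

lemma countP_eq_card' (N : ℕ) (c : List α) (h : c.length = N) (p : α → Bool) (d : α) :
    (Finset.univ.filter fun r : Fin N => p (c.getD r d)).card = c.countP p := by
  subst h
  rw [Finset.card_filter, Fin.sum_univ_eq_sum_range (fun x => if p (c.getD x d) then 1 else 0)]
  rw [← List.take_length (l := c), countP_take_eq c p d c.length le_rfl]
  simp

lemma countP_take_card' (N : ℕ) (c : List α) (h : c.length = N) (p : α → Bool) (d : α)
    (j : ℕ) (hj : j ≤ N) :
    (Finset.univ.filter fun r : Fin N => p (c.getD r d) ∧ (r : ℕ) < j).card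
      = (c.take j).countP p := by
  subst h
  rw [Finset.card_filter,
    Fin.sum_univ_eq_sum_range (fun x => if p (c.getD x d) ∧ x < j then 1 else 0),
    countP_take_eq c p d j hj]
  rw [← Finset.sum_subset (Finset.range_subset_range.2 hj)]
  · apply Finset.sum_congr rfl
    intro x hx
    simp only [Finset.mem_range] at hx
    simp [hx]
  · intro x _ hx
    simp only [Finset.mem_range, not_lt] at hx
    have hxx : ¬ x < j := by omega
    simp [hxx]

lemma card_fiber {β : Type*} [DecidableEq β] [Fintype α] (f : α → β)
    (hf : Function.Injective f) (r : β) :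
    (Finset.univ.filter fun a => f a = r).card = if r ∈ Set.range f then 1 else 0 := by
  split
  · next h =>
    rcases h with ⟨a, rfl⟩
    rw [Finset.card_eq_one]
    exact ⟨a, by ext x; simp [hf.eq_iff]⟩
  · next h =>
    rw [Finset.card_eq_zero, Finset.filter_eq_empty_iff]
    intro x _ hx
    exact h ⟨x, hx⟩

lemma orderEmbOfFin_rank {N n : ℕ} (s : Finset (Fin N)) (h : s.card = n) (a : Fin n) :
    (s.filter (· < s.orderEmbOfFin h a)).card = a := by
  have key : s.filter (· < s.orderEmbOfFin h a)
      = (Finset.univ.filter (fun x : Fin n => x < a)).image (s.orderEmbOfFin h) := by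
    ext x
    simp only [Finset.mem_filter, Finset.mem_image, Finset.mem_univ, true_and]
    constructor
    · rintro ⟨hx, hlt⟩
      have : x ∈ Set.range (s.orderEmbOfFin h) := by
        rw [Finset.range_orderEmbOfFin]; exact hx
      rcases this with ⟨a', rfl⟩
      exact ⟨a', (s.orderEmbOfFin h).lt_iff_lt.1 hlt, rfl⟩
    · rintro ⟨a', ha', rfl⟩
      exact ⟨Finset.orderEmbOfFin_mem s h a', (s.orderEmbOfFin h).lt_iff_lt.2 ha'⟩
  rw [key, Finset.card_image_of_injective _ (s.orderEmbOfFin h).injective]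
  have : Finset.univ.filter (fun x : Fin n => x < a) = Finset.Iio a := by ext x; simp
  rw [this, Fin.card_Iio]

end Counting

def SKf (N : ℕ) (c : List St) : Finset (Fin N) :=
  Finset.univ.filter fun r : Fin N => cK (c.getD (r : ℕ) .K)

def SLf (N : ℕ) (c : List St) : Finset (Fin N) :=
  Finset.univ.filter fun r : Fin N => cL (c.getD (r : ℕ) .K)

lemma SKf_card {n N : ℕ} {c : List St} (hlen : c.length = N) (hK : c.countP cK = n) :
    (SKf N c).card = n := by rw [SKf, countP_eq_card' N c hlen, hK]

lemma SLf_card {m N : ℕ} {c : List St} (hlen : c.length = N) (hL : c.countP cL = m) :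
    (SLf N c).card = m := by rw [SLf, countP_eq_card' N c hlen, hL]

def sigOf (n m N : ℕ) (c : List St) (hlen : c.length = N) (hK : c.countP cK = n)
    (hL : c.countP cL = m) : Fin (n + m) → Fin N :=
  fun i =>
    if h : (i : ℕ) < n then (SKf N c).orderEmbOfFin (SKf_card hlen hK) ⟨i, h⟩
    else (SLf N c).orderEmbOfFin (SLf_card hlen hL)
      ⟨(i : ℕ) - n, by have := i.isLt; omega⟩

variable {n m N : ℕ} {c : List St} (hlen : c.length = N) (hK : c.countP cK = n)
  (hL : c.countP cL = m)

lemma sigOf_castAdd (a : Fin n) :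
    sigOf n m N c hlen hK hL (Fin.castAdd m a)
      = (SKf N c).orderEmbOfFin (SKf_card hlen hK) a := by
  have h : ((Fin.castAdd m a : Fin (n + m)) : ℕ) < n := a.isLt
  simp only [sigOf]
  rw [dif_pos h]
  exact congrArg _ (Fin.ext rfl)

lemma sigOf_natAdd (b : Fin m) :
    sigOf n m N c hlen hK hL (Fin.natAdd n b)
      = (SLf N c).orderEmbOfFin (SLf_card hlen hL) b := by
  have h : ¬ ((Fin.natAdd n b : Fin (n + m)) : ℕ) < n := by simp
  simp only [sigOf]
  rw [dif_neg h]
  congr 1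
  exact Fin.ext (by simp)

lemma Uk_sigOf (r : Fin N) :
    Uk n m N (sigOf n m N c hlen hK hL) r = if r ∈ SKf N c then 1 else 0 := by
  unfold Uk
  have he : (Finset.univ.filter fun a : Fin n => sigOf n m N c hlen hK hL (Fin.castAdd m a) = r)
      = Finset.univ.filter fun a => (SKf N c).orderEmbOfFin (SKf_card hlen hK) a = r :=
    Finset.filter_congr fun a _ => by rw [sigOf_castAdd]
  rw [he, card_fiber _ ((SKf N c).orderEmbOfFin (SKf_card hlen hK)).injective]
  have hr : r ∈ Set.range ⇑((SKf N c).orderEmbOfFin (SKf_card hlen hK)) ↔ r ∈ SKf N c := by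
    rw [Finset.range_orderEmbOfFin]; simp
  exact if_congr hr rfl rfl

lemma Ul_sigOf (r : Fin N) :
    Ul n m N (sigOf n m N c hlen hK hL) r = if r ∈ SLf N c then 1 else 0 := by
  unfold Ul
  have he : (Finset.univ.filter fun b : Fin m => sigOf n m N c hlen hK hL (Fin.natAdd n b) = r)
      = Finset.univ.filter fun b => (SLf N c).orderEmbOfFin (SLf_card hlen hL) b = r :=
    Finset.filter_congr fun b _ => by rw [sigOf_natAdd]
  rw [he, card_fiber _ ((SLf N c).orderEmbOfFin (SLf_card hlen hL)).injective]
  have hr : r ∈ Set.range ⇑((SLf N c).orderEmbOfFin (SLf_card hlen hL)) ↔ r ∈ SLf N c := by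
    rw [Finset.range_orderEmbOfFin]; simp
  exact if_congr hr rfl rfl

lemma mem_SKf (r : Fin N) : r ∈ SKf N c ↔ cK (c.getD (r : ℕ) .K) := by simp [SKf]
lemma mem_SLf (r : Fin N) : r ∈ SLf N c ↔ cL (c.getD (r : ℕ) .K) := by simp [SLf]

lemma SKf_union (r : Fin N) : r ∈ SKf N c ∨ r ∈ SLf N c := by
  rw [mem_SKf, mem_SLf]
  cases c.getD (r : ℕ) .K <;> simp [cK, cL]

end

lemma sigOf_adm {n m k : ℕ} {c : List St} (hlen : c.length = n + m - k)
    (hK : c.countP cK = n) (hL : c.countP cL = m) (hk : c.count St.KL = k) :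
    StuffleAdm n m k (sigOf n m (n + m - k) c hlen hK hL) := by
  refine ⟨?_, ?_, ?_, ?_, ?_⟩
  · intro a b hab
    rw [sigOf_castAdd, sigOf_castAdd]
    exact ((SKf _ c).orderEmbOfFin (SKf_card hlen hK)).monotone hab
  · intro a b hab
    rw [sigOf_natAdd, sigOf_natAdd]
    exact ((SLf _ c).orderEmbOfFin (SLf_card hlen hL)).monotone hab
  · intro r
    rcases SKf_union (c := c) r with h | h
    · have : r ∈ Set.range ⇑((SKf _ c).orderEmbOfFin (SKf_card hlen hK)) := by
        rw [Finset.range_orderEmbOfFin]; exact h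
      rcases this with ⟨a, ha⟩
      exact ⟨Fin.castAdd m a, by rw [sigOf_castAdd]; exact ha⟩
    · have : r ∈ Set.range ⇑((SLf _ c).orderEmbOfFin (SLf_card hlen hL)) := by
        rw [Finset.range_orderEmbOfFin]; exact h
      rcases this with ⟨b, hb⟩
      exact ⟨Fin.natAdd n b, by rw [sigOf_natAdd]; exact hb⟩
  · intro r
    rw [Uk_sigOf, Ul_sigOf]
    by_cases h1 : r ∈ SKf (n + m - k) c <;> by_cases h2 : r ∈ SLf (n + m - k) c
    · right; right; simp [h1, h2]
    · left; simp [h1, h2]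
    · right; left; simp [h1, h2]
    · exact absurd (SKf_union (c := c) r) (by simp [h1, h2])
  · have hset : (Finset.univ.filter fun r => Uk n m (n + m - k)
        (sigOf n m (n + m - k) c hlen hK hL) r = 1 ∧ Ul n m (n + m - k)
        (sigOf n m (n + m - k) c hlen hK hL) r = 1)
        = Finset.univ.filter fun r : Fin (n + m - k) =>
            ((c.getD (r : ℕ) .K == St.KL) : Bool) := by
      refine Finset.filter_congr fun r _ => ?_
      rw [Uk_sigOf, Ul_sigOf]
      have h1 := mem_SKf (c := c) (N := n + m - k) r
      have h2 := mem_SLf (c := c) (N := n + m - k) r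
      cases hc : c.getD (r : ℕ) St.K <;> rw [hc] at h1 h2 <;>
        simp [cK, cL] at h1 h2 <;> simp [h1, h2]
    rw [hset, countP_eq_card' _ c hlen (fun s => s == St.KL) St.K,
      ← List.count_eq_countP, hk]

lemma countP_take_lt {α : Type*} (c : List α) (p : α → Bool) (d : α) (j : ℕ)
    (hj : j < c.length) (h : p (c.getD j d) = true) :
    (c.take j).countP p < c.countP p := by
  have e1 : (c.take (j+1)).countP p = (c.take j).countP p + 1 := by
    rw [List.take_succ, List.countP_append, List.getElem?_eq_getElem hj]
    rw [List.getD_eq_getElem c d hj] at h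
    simp [List.countP_cons, h]
  have e2 : (c.take (j+1)).countP p ≤ c.countP p := (List.take_sublist _ _).countP_le
  omega

section EntryWd

variable {n m N : ℕ} {c : List St} (hlen : c.length = N) (hK : c.countP cK = n)
  (hL : c.countP cL = m)

lemma filter_lt_SKf (r : Fin N) :
    (SKf N c).filter (· < r) = Finset.univ.filter
      (fun x : Fin N => cK (c.getD (x : ℕ) .K) ∧ (x : ℕ) < (r : ℕ)) := by
  rw [SKf, Finset.filter_filter]
  exact Finset.filter_congr fun x _ => and_congr_right fun _ => Fin.lt_def

lemma filter_lt_SLf (r : Fin N) :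
    (SLf N c).filter (· < r) = Finset.univ.filter
      (fun x : Fin N => cL (c.getD (x : ℕ) .K) ∧ (x : ℕ) < (r : ℕ)) := by
  rw [SLf, Finset.filter_filter]
  exact Finset.filter_congr fun x _ => and_congr_right fun _ => Fin.lt_def

lemma entry_sigOf (ks : Fin n → ℕ) (ls : Fin m → ℕ) (r : Fin N) :
    entry n m N ks ls (sigOf n m N c hlen hK hL) r =
      (if cK (c.getD (r : ℕ) .K) then (List.ofFn ks).getD ((c.take (r : ℕ)).countP cK) 0 else 0)
      + (if cL (c.getD (r : ℕ) .K) then (List.ofFn ls).getD ((c.take (r : ℕ)).countP cL) 0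
          else 0) := by
  unfold entry
  congr 1
  · set emb := (SKf N c).orderEmbOfFin (SKf_card hlen hK) with hemb
    have he : (Finset.univ.filter fun a : Fin n => sigOf n m N c hlen hK hL (Fin.castAdd m a) = r)
        = Finset.univ.filter fun a => emb a = r :=
      Finset.filter_congr fun a _ => by rw [sigOf_castAdd]
    rw [he]
    by_cases h1 : r ∈ SKf N c
    · have hr : r ∈ Set.range ⇑emb := by rw [hemb, Finset.range_orderEmbOfFin]; exact h1
      rcases hr with ⟨a₀, ha₀⟩
      have hfib : Finset.univ.filter (fun a => emb a = r) = {a₀} := by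
        ext a
        simp only [Finset.mem_filter, Finset.mem_univ, true_and, Finset.mem_singleton]
        rw [← ha₀]
        exact ⟨fun h => emb.injective h, fun h => by rw [h]⟩
      rw [hfib, Finset.sum_singleton, if_pos ((mem_SKf r).1 h1)]
      have hrank : (a₀ : ℕ) = (c.take (r : ℕ)).countP cK := by
        have h2 := orderEmbOfFin_rank (SKf N c) (SKf_card hlen hK) a₀
        rw [← hemb, ha₀, filter_lt_SKf,
          countP_take_card' N c hlen cK St.K (r : ℕ) (le_of_lt r.isLt)] at h2
        exact h2.symm
      have hlt : (c.take (r : ℕ)).countP cK < n := hrank ▸ a₀.isLt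
      rw [List.getD_eq_getElem _ _ (by simpa using hlt), List.getElem_ofFn]
      exact congrArg ks (Fin.ext hrank)
    · have hfib : Finset.univ.filter (fun a => emb a = r) = ∅ :=
        Finset.filter_eq_empty_iff.2 fun a _ ha =>
          h1 (by rw [← ha]; exact Finset.orderEmbOfFin_mem _ _ a)
      rw [hfib, Finset.sum_empty, if_neg (fun hc => h1 ((mem_SKf r).2 hc))]
  · set emb := (SLf N c).orderEmbOfFin (SLf_card hlen hL) with hemb
    have he : (Finset.univ.filter fun b : Fin m => sigOf n m N c hlen hK hL (Fin.natAdd n b) = r)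
        = Finset.univ.filter fun b => emb b = r :=
      Finset.filter_congr fun b _ => by rw [sigOf_natAdd]
    rw [he]
    by_cases h1 : r ∈ SLf N c
    · have hr : r ∈ Set.range ⇑emb := by rw [hemb, Finset.range_orderEmbOfFin]; exact h1
      rcases hr with ⟨b₀, hb₀⟩
      have hfib : Finset.univ.filter (fun b => emb b = r) = {b₀} := by
        ext b
        simp only [Finset.mem_filter, Finset.mem_univ, true_and, Finset.mem_singleton]
        rw [← hb₀]
        exact ⟨fun h => emb.injective h, fun h => by rw [h]⟩
      rw [hfib, Finset.sum_singleton, if_pos ((mem_SLf r).1 h1)]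
      have hrank : (b₀ : ℕ) = (c.take (r : ℕ)).countP cL := by
        have h2 := orderEmbOfFin_rank (SLf N c) (SLf_card hlen hL) b₀
        rw [← hemb, hb₀, filter_lt_SLf,
          countP_take_card' N c hlen cL St.K (r : ℕ) (le_of_lt r.isLt)] at h2
        exact h2.symm
      have hlt : (c.take (r : ℕ)).countP cL < m := hrank ▸ b₀.isLt
      rw [List.getD_eq_getElem _ _ (by simpa using hlt), List.getElem_ofFn]
      exact congrArg ls (Fin.ext hrank)
    · have hfib : Finset.univ.filter (fun b => emb b = r) = ∅ :=
        Finset.filter_eq_empty_iff.2 fun b _ hb =>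
          h1 (by rw [← hb]; exact Finset.orderEmbOfFin_mem _ _ b)
      rw [hfib, Finset.sum_empty, if_neg (fun hc => h1 ((mem_SLf r).2 hc))]

end EntryWd

lemma wd_length : ∀ (c : List St) (w1 w2 : List ℕ), c.countP cK = w1.length →
    c.countP cL = w2.length → (wd c w1 w2).length = c.length := by
  intro c
  induction c with
  | nil => intro w1 w2 _ _; simp [wd]
  | cons s t ih =>
    intro w1 w2 h1 h2
    cases s
    · rw [List.countP_cons] at h1 h2
      simp only [cK, cL, reduceIte, Bool.false_eq_true] at h1 h2
      cases w1 with
      | nil => simp at h1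
      | cons k w1' =>
        simp only [wd, List.length_cons]
        rw [ih w1' w2 (by simpa using h1) (by simpa using h2)]
    · rw [List.countP_cons] at h1 h2
      simp only [cK, cL, reduceIte, Bool.false_eq_true] at h1 h2
      cases w2 with
      | nil => simp at h2
      | cons l w2' =>
        simp only [wd, List.length_cons]
        rw [ih w1 w2' (by simpa using h1) (by simpa using h2)]
    · rw [List.countP_cons] at h1 h2
      simp only [cK, cL, reduceIte] at h1 h2
      cases w1 with
      | nil => simp at h1
      | cons k w1' =>
        cases w2 with
        | nil => simp at h2
        | cons l w2' =>
          simp only [wd, List.length_cons]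
          rw [ih w1' w2' (by simpa using h1) (by simpa using h2)]

lemma wd_getD : ∀ (c : List St) (w1 w2 : List ℕ), c.countP cK = w1.length →
    c.countP cL = w2.length → ∀ j, j < c.length →
    (wd c w1 w2).getD j 0 =
      (if cK (c.getD j .K) then w1.getD ((c.take j).countP cK) 0 else 0)
      + (if cL (c.getD j .K) then w2.getD ((c.take j).countP cL) 0 else 0) := by
  intro c
  induction c with
  | nil => intro w1 w2 _ _ j hj; simp at hj
  | cons s t ih =>
    intro w1 w2 h1 h2 j hj
    rw [List.countP_cons] at h1 h2
    cases s
    · simp only [cK, cL, reduceIte, Bool.false_eq_true] at h1 h2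
      cases w1 with
      | nil => simp at h1
      | cons k w1' =>
        cases j with
        | zero => simp [wd, cK, cL]
        | succ j =>
          simp only [wd, List.getD_cons_succ, List.take_succ_cons, List.getD_cons_zero,
            List.countP_cons, cK, cL, reduceIte, Bool.false_eq_true]
          rw [ih w1' w2 (by simpa using h1) (by simpa using h2) j (by simpa using hj)]
          simp [cK, cL]
    · simp only [cK, cL, reduceIte, Bool.false_eq_true] at h1 h2
      cases w2 with
      | nil => simp at h2
      | cons l w2' =>
        cases j with
        | zero => simp [wd, cK, cL]
        | succ j =>
          simp only [wd, List.getD_cons_succ, List.take_succ_cons, List.countP_cons]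
          rw [ih w1 w2' (by simpa using h1) (by simpa using h2) j (by simpa using hj)]
          simp [cK, cL]
    · simp only [cK, cL, reduceIte] at h1 h2
      cases w1 with
      | nil => simp at h1
      | cons k w1' =>
        cases w2 with
        | nil => simp at h2
        | cons l w2' =>
          cases j with
          | zero => simp [wd, cK, cL]
          | succ j =>
            simp only [wd, List.getD_cons_succ, List.take_succ_cons, List.countP_cons]
            rw [ih w1' w2' (by simpa using h1) (by simpa using h2) j (by simpa using hj)]
            simp [cK, cL]

lemma ofFn_entry_eq_wd {n m N : ℕ} {c : List St} (hlen : c.length = N)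
    (hK : c.countP cK = n) (hL : c.countP cL = m) (ks : Fin n → ℕ) (ls : Fin m → ℕ) :
    List.ofFn (fun r : Fin N => entry n m N ks ls (sigOf n m N c hlen hK hL) r)
      = wd c (List.ofFn ks) (List.ofFn ls) := by
  have hwl : (wd c (List.ofFn ks) (List.ofFn ls)).length = N := by
    rw [wd_length c _ _ (by simp [hK]) (by simp [hL]), hlen]
  apply List.ext_getElem (by simp [hwl])
  intro j h1 h2
  have hjN : j < N := by simpa using h1
  rw [List.getElem_ofFn]
  rw [show (wd c (List.ofFn ks) (List.ofFn ls))[j] =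
    (wd c (List.ofFn ks) (List.ofFn ls)).getD j 0 from (List.getD_eq_getElem _ _ h2).symm]
  rw [wd_getD c _ _ (by simp [hK]) (by simp [hL]) j (by omega)]
  exact entry_sigOf hlen hK hL ks ls ⟨j, hjN⟩

def toc (n m N : ℕ) (σ : Fin (n + m) → Fin N) : List St :=
  List.ofFn (fun r : Fin N =>
    if 1 ≤ Uk n m N σ r then (if 1 ≤ Ul n m N σ r then .KL else .K) else .L)

lemma toc_length (n m N : ℕ) (σ : Fin (n + m) → Fin N) : (toc n m N σ).length = N := by
  simp [toc]

lemma getD_toc (n m N : ℕ) (σ : Fin (n + m) → Fin N) (r : Fin N) :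
    (toc n m N σ).getD (r : ℕ) .K
      = if 1 ≤ Uk n m N σ r then (if 1 ≤ Ul n m N σ r then .KL else .K) else .L := by
  rw [List.getD_eq_getElem _ _ (by rw [toc_length]; exact r.isLt)]
  simp [toc]

lemma toc_sigOf {n m N : ℕ} {c : List St} (hlen : c.length = N) (hK : c.countP cK = n)
    (hL : c.countP cL = m) : toc n m N (sigOf n m N c hlen hK hL) = c := by
  apply List.ext_getElem (by rw [toc_length, hlen])
  intro j h1 h2
  have hjN : j < N := by rwa [toc_length] at h1
  have e1 : (toc n m N (sigOf n m N c hlen hK hL))[j]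
      = (toc n m N (sigOf n m N c hlen hK hL)).getD ((⟨j, hjN⟩ : Fin N) : ℕ) .K :=
    (List.getD_eq_getElem _ _ _).symm
  rw [e1, getD_toc, Uk_sigOf, Ul_sigOf]
  have hK1 := mem_SKf (c := c) (N := N) ⟨j, hjN⟩
  have hL1 := mem_SLf (c := c) (N := N) ⟨j, hjN⟩
  have hgd : c.getD j St.K = c.get ⟨j, h2⟩ := (List.getD_eq_getElem c St.K h2).trans (List.get_eq_getElem (l := c) (i := ⟨j, h2⟩)).symm
  rw [hgd] at hK1 hL1
  rw [← List.get_eq_getElem (l := c) (i := ⟨j, h2⟩)]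
  by_cases hk1 : (⟨j, hjN⟩ : Fin N) ∈ SKf N c <;> by_cases hl1 : (⟨j, hjN⟩ : Fin N) ∈ SLf N c
  · rw [if_pos (by simp [hk1]), if_pos (by simp [hl1])]
    have ck := hK1.1 hk1
    have cl := hL1.1 hl1
    cases hc : c.get ⟨j, h2⟩ <;> rw [hc] at ck cl <;> simp [cK, cL] at ck cl ⊢
  · rw [if_pos (by simp [hk1]), if_neg (by simp [hl1])]
    have ck := hK1.1 hk1
    have hcl : cL (c.get ⟨j, h2⟩) = false := by
      cases hb : cL (c.get ⟨j, h2⟩)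
      · rfl
      · exact absurd (hL1.2 hb) hl1
    cases hc : c.get ⟨j, h2⟩ <;> rw [hc] at ck hcl <;> simp [cK, cL] at ck hcl ⊢
  · rw [if_neg (by simp [hk1])]
    have cl := hL1.1 hl1
    have hck : cK (c.get ⟨j, h2⟩) = false := by
      cases hb : cK (c.get ⟨j, h2⟩)
      · rfl
      · exact absurd (hK1.2 hb) hk1
    cases hc : c.get ⟨j, h2⟩ <;> rw [hc] at cl hck <;> simp [cK, cL] at cl hck ⊢
  · exact absurd (SKf_union (c := c) ⟨j, hjN⟩) (by simp [hk1, hl1])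

section AdmProps

variable {n m k : ℕ} {σ : Fin (n + m) → Fin (n + m - k)} (hσ : StuffleAdm n m k σ)

lemma Uk_sum : ∑ r : Fin (n + m - k), Uk n m (n + m - k) σ r = n := by
  have h := Finset.card_eq_sum_card_fiberwise
    (f := fun a : Fin n => σ (Fin.castAdd m a)) (s := Finset.univ) (t := Finset.univ)
    (fun x _ => Finset.mem_univ _)
  simpa [Uk] using h.symm

lemma Ul_sum : ∑ r : Fin (n + m - k), Ul n m (n + m - k) σ r = m := by
  have h := Finset.card_eq_sum_card_fiberwise
    (f := fun b : Fin m => σ (Fin.natAdd n b)) (s := Finset.univ) (t := Finset.univ)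
    (fun x _ => Finset.mem_univ _)
  simpa [Ul] using h.symm

include hσ

lemma toc_countK : (toc n m (n + m - k) σ).countP cK = n := by
  rw [← countP_eq_card' (n + m - k) _ (toc_length n m _ σ) cK St.K]
  have hset : (Finset.univ.filter fun r : Fin (n + m - k) =>
      cK ((toc n m (n + m - k) σ).getD (r : ℕ) .K))
      = Finset.univ.filter fun r => Uk n m (n + m - k) σ r = 1 := by
    refine Finset.filter_congr fun r _ => ?_
    rw [getD_toc]
    rcases hσ.2.2.2.1 r with ⟨ha, hb⟩ | ⟨ha, hb⟩ | ⟨ha, hb⟩ <;> simp [ha, hb, cK]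
  rw [hset, Finset.card_filter]
  have hcg : ∀ r ∈ Finset.univ, (if Uk n m (n + m - k) σ r = 1 then 1 else 0)
      = Uk n m (n + m - k) σ r := fun r _ => by
    rcases hσ.2.2.2.1 r with ⟨ha, _⟩ | ⟨ha, _⟩ | ⟨ha, _⟩ <;> simp [ha]
  rw [Finset.sum_congr rfl hcg]
  exact Uk_sum

lemma toc_countL : (toc n m (n + m - k) σ).countP cL = m := by
  rw [← countP_eq_card' (n + m - k) _ (toc_length n m _ σ) cL St.K]
  have hset : (Finset.univ.filter fun r : Fin (n + m - k) =>
      cL ((toc n m (n + m - k) σ).getD (r : ℕ) .K))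
      = Finset.univ.filter fun r => Ul n m (n + m - k) σ r = 1 := by
    refine Finset.filter_congr fun r _ => ?_
    rw [getD_toc]
    rcases hσ.2.2.2.1 r with ⟨ha, hb⟩ | ⟨ha, hb⟩ | ⟨ha, hb⟩ <;> simp [ha, hb, cL]
  rw [hset, Finset.card_filter]
  have hcg : ∀ r ∈ Finset.univ, (if Ul n m (n + m - k) σ r = 1 then 1 else 0)
      = Ul n m (n + m - k) σ r := fun r _ => by
    rcases hσ.2.2.2.1 r with ⟨_, ha⟩ | ⟨_, ha⟩ | ⟨_, ha⟩ <;> simp [ha]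
  rw [Finset.sum_congr rfl hcg]
  exact Ul_sum

lemma toc_countKL : (toc n m (n + m - k) σ).count St.KL = k := by
  rw [List.count_eq_countP, ← countP_eq_card' (n + m - k) _ (toc_length n m _ σ) _ St.K]
  have hset : (Finset.univ.filter fun r : Fin (n + m - k) =>
      (((toc n m (n + m - k) σ).getD (r : ℕ) .K) == St.KL : Bool))
      = Finset.univ.filter fun r => Uk n m (n + m - k) σ r = 1 ∧ Ul n m (n + m - k) σ r = 1 := by
    refine Finset.filter_congr fun r _ => ?_
    rw [getD_toc]
    rcases hσ.2.2.2.1 r with ⟨ha, hb⟩ | ⟨ha, hb⟩ | ⟨ha, hb⟩ <;> simp [ha, hb]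
  rw [hset, hσ.2.2.2.2]

lemma castAdd_mem_SKf_toc (a : Fin n) :
    σ (Fin.castAdd m a) ∈ SKf (n + m - k) (toc n m (n + m - k) σ) := by
  rw [mem_SKf, getD_toc]
  have hmem : a ∈ Finset.univ.filter
      (fun a' : Fin n => σ (Fin.castAdd m a') = σ (Fin.castAdd m a)) := by simp
  have hpos : 1 ≤ Uk n m (n + m - k) σ (σ (Fin.castAdd m a)) :=
    Finset.card_pos.2 ⟨a, hmem⟩
  rw [if_pos hpos]
  split <;> rfl

lemma natAdd_mem_SLf_toc (b : Fin m) :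
    σ (Fin.natAdd n b) ∈ SLf (n + m - k) (toc n m (n + m - k) σ) := by
  rw [mem_SLf, getD_toc]
  have hmem : b ∈ Finset.univ.filter
      (fun b' : Fin m => σ (Fin.natAdd n b') = σ (Fin.natAdd n b)) := by simp
  have hpos : 1 ≤ Ul n m (n + m - k) σ (σ (Fin.natAdd n b)) :=
    Finset.card_pos.2 ⟨b, hmem⟩
  by_cases hu : 1 ≤ Uk n m (n + m - k) σ (σ (Fin.natAdd n b))
  · rw [if_pos hu, if_pos hpos]
    rfl
  · rw [if_neg hu]
    rfl

lemma sigma_castAdd_strictMono : StrictMono (fun a : Fin n => σ (Fin.castAdd m a)) := by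
  have hmono : Monotone (fun a : Fin n => σ (Fin.castAdd m a)) := fun a b hab => hσ.1 a b hab
  refine hmono.strictMono_of_injective ?_
  intro a b hab
  by_contra hne
  have hsub : ({a, b} : Finset (Fin n)) ⊆ Finset.univ.filter
      (fun a' : Fin n => σ (Fin.castAdd m a') = σ (Fin.castAdd m a)) := by
    intro x hx
    simp only [Finset.mem_insert, Finset.mem_singleton] at hx
    rcases hx with rfl | rfl <;> simp [hab]
  have h2 : 2 ≤ Uk n m (n + m - k) σ (σ (Fin.castAdd m a)) := by
    rw [Uk, ← Finset.card_pair hne]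
    exact Finset.card_le_card hsub
  rcases hσ.2.2.2.1 (σ (Fin.castAdd m a)) with ⟨ha, _⟩ | ⟨ha, _⟩ | ⟨ha, _⟩ <;> omega

lemma sigma_natAdd_strictMono : StrictMono (fun b : Fin m => σ (Fin.natAdd n b)) := by
  have hmono : Monotone (fun b : Fin m => σ (Fin.natAdd n b)) := fun a b hab => hσ.2.1 a b hab
  refine hmono.strictMono_of_injective ?_
  intro a b hab
  by_contra hne
  have hsub : ({a, b} : Finset (Fin m)) ⊆ Finset.univ.filter
      (fun b' : Fin m => σ (Fin.natAdd n b') = σ (Fin.natAdd n a)) := by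
    intro x hx
    simp only [Finset.mem_insert, Finset.mem_singleton] at hx
    rcases hx with rfl | rfl <;> simp [hab]
  have h2 : 2 ≤ Ul n m (n + m - k) σ (σ (Fin.natAdd n a)) := by
    rw [Ul, ← Finset.card_pair hne]
    exact Finset.card_le_card hsub
  rcases hσ.2.2.2.1 (σ (Fin.natAdd n a)) with ⟨_, ha⟩ | ⟨_, ha⟩ | ⟨_, ha⟩ <;> omega

lemma sigOf_toc (hlen : (toc n m (n + m - k) σ).length = n + m - k)
    (hK : (toc n m (n + m - k) σ).countP cK = n)
    (hL : (toc n m (n + m - k) σ).countP cL = m) :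
    sigOf n m (n + m - k) (toc n m (n + m - k) σ) hlen hK hL = σ := by
  have hKey : (fun a : Fin n => σ (Fin.castAdd m a))
      = ⇑((SKf (n + m - k) (toc n m (n + m - k) σ)).orderEmbOfFin (SKf_card hlen hK)) :=
    Finset.orderEmbOfFin_unique _ (fun a => castAdd_mem_SKf_toc hσ a)
      (sigma_castAdd_strictMono hσ)
  have hKeyL : (fun b : Fin m => σ (Fin.natAdd n b))
      = ⇑((SLf (n + m - k) (toc n m (n + m - k) σ)).orderEmbOfFin (SLf_card hlen hL)) :=
    Finset.orderEmbOfFin_unique _ (fun b => natAdd_mem_SLf_toc hσ b)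
      (sigma_natAdd_strictMono hσ)
  funext i
  by_cases h : (i : ℕ) < n
  · have hi : i = Fin.castAdd m ⟨(i : ℕ), h⟩ := Fin.ext rfl
    rw [hi, sigOf_castAdd, ← congrFun hKey ⟨(i : ℕ), h⟩]
  · have hin : (i : ℕ) - n < m := by have := i.isLt; omega
    have hi : i = Fin.natAdd n ⟨(i : ℕ) - n, hin⟩ := Fin.ext (by simp; omega)
    rw [hi, sigOf_natAdd, ← congrFun hKeyL ⟨(i : ℕ) - n, hin⟩]

end AdmProps

lemma filterC_unpack {n m k : ℕ} {c : List St}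
    (hc : c ∈ (C n m).filter (fun c => c.count St.KL = k)) :
    c.countP cK = n ∧ c.countP cL = m ∧ c.count St.KL = k ∧ c.length = n + m - k ∧
      k ≤ min m n := by
  rcases Finset.mem_filter.1 hc with ⟨h1, h2⟩
  rcases (mem_C c n m).1 h1 with ⟨hK, hL⟩
  have e1 := count_len c
  have e2 := countKL_le_K c
  have e3 := countKL_le_L c
  exact ⟨hK, hL, h2, by omega, by omega⟩

def sigOf2 (n m k : ℕ) (c : List St)
    (hc : c ∈ (C n m).filter (fun c => c.count St.KL = k)) :
    Fin (n + m) → Fin (n + m - k) :=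
  sigOf n m (n + m - k) c (filterC_unpack hc).2.2.2.1 (filterC_unpack hc).1
    (filterC_unpack hc).2.1

/-- Corollary 2: the combinatorial description of the stuffle product
`z_{k₁}⋯z_{kₙ} * z_{l₁}⋯z_{l_m}`. -/
theorem stuffle_combinatorial (n m : ℕ) (hn : 1 ≤ n) (hm : 1 ≤ m)
    (ks : Fin n → ℕ) (ls : Fin m → ℕ) (hks : ∀ r, 1 ≤ ks r) (hls : ∀ s, 1 ≤ ls s) :
    hst (List.ofFn ks) (List.ofFn ls) =
      ∑ k ∈ Finset.range (min m n + 1),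
        ∑ σ ∈ @Finset.filter _ (StuffleAdm n m k) (Classical.decPred _) Finset.univ,
          zw (List.ofFn fun r : Fin (n + m - k) => entry n m _ ks ls σ r) := by
  classical
  have hmaps : ∀ c ∈ C n m, c.count St.KL ∈ Finset.range (min m n + 1) := by
    intro c hc
    rcases (mem_C c n m).1 hc with ⟨h1, h2⟩
    have e2 := countKL_le_K c
    have e3 := countKL_le_L c
    simp only [Finset.mem_range]
    omega
  rw [hst_eq, List.length_ofFn, List.length_ofFn,
    ← Finset.sum_fiberwise_of_maps_to hmaps (fun c => zw (wd c (List.ofFn ks) (List.ofFn ls)))]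
  refine Finset.sum_congr rfl fun k hk => ?_
  refine Finset.sum_bij' (fun c hc => sigOf2 n m k c hc)
    (fun σ _ => toc n m (n + m - k) σ) ?_ ?_ ?_ ?_ ?_
  · intro c hc
    refine Finset.mem_filter.2 ⟨Finset.mem_univ _, ?_⟩
    unfold sigOf2
    exact sigOf_adm _ _ _ (filterC_unpack hc).2.2.1
  · intro σ hσ'
    have hσ : StuffleAdm n m k σ := (Finset.mem_filter.1 hσ').2
    refine Finset.mem_filter.2 ⟨?_, toc_countKL hσ⟩
    exact (mem_C _ n m).2 ⟨toc_countK hσ, toc_countL hσ⟩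
  · intro c hc
    unfold sigOf2
    exact toc_sigOf _ _ _
  · intro σ hσ'
    have hσ : StuffleAdm n m k σ := (Finset.mem_filter.1 hσ').2
    unfold sigOf2
    exact sigOf_toc hσ _ _ _
  · intro c hc
    unfold sigOf2
    exact (congrArg zw (ofFn_entry_eq_wd (filterC_unpack hc).2.2.2.1 (filterC_unpack hc).1
      (filterC_unpack hc).2.1 ks ls)).symm
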